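/- arXiv:2112.13386 — 2 statements merged into one kernel-verified Lean document; each statement's English description precedes it below -/
import Mathlib

section
/- Let γ ∈ [0,1) and ε > 0, and set ε' := (1+3γ)/(1−γ) · ε. Let H be a nonempty finite set with functions Q : H × A → ℝ and V(h) := max_a Q(h,a) satisfying: (i) |V(h) − V(h')| ≤ ε for all h, h' ∈ H; (ii) a common maximizing action a* exists (Q(h,a*)=V(h) for all h). Suppose q : A → ℝ satisfies |q(a) − Q̄(a)| ≤ 2γε/(1−γ) for all a, where Q̄(a) := Σ_h B(h) Q(h,a) for a probability mass function B on H. Then for any action b with V(h) − Q(h,b) > ε' for all h ∈ H, we have max_a q(a) > q(b). -/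
theorem no_suboptimal_support {H A : Type*} [Fintype H] [Nonempty H] [Fintype A] [Nonempty A]
    (γ ε : ℝ) (hγ0 : 0 ≤ γ) (hγ1 : γ < 1) (hε : 0 < ε)
    (Q : H → A → ℝ) (V : H → ℝ)
    (hV : ∀ h, V h = Finset.univ.sup' Finset.univ_nonempty (Q h))
    (hunif : ∀ h h' : H, |V h - V h'| ≤ ε)
    (hopt : ∃ astar : A, ∀ h : H, Q h astar = V h)
    (B : H → ℝ) (hBnn : ∀ h, 0 ≤ B h) (hBsum : ∑ h : H, B h = 1)
    (q : A → ℝ)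
    (hq : ∀ a : A, |q a - ∑ h : H, B h * Q h a| ≤ 2 * γ * ε / (1 - γ))
    (b : A) (hb : ∀ h : H, V h - Q h b > (1 + 3 * γ) / (1 - γ) * ε) :
    Finset.univ.sup' Finset.univ_nonempty q > q b := by
  obtain ⟨a, ha⟩ := hopt
  have h1γ : (0:ℝ) < 1 - γ := by linarith
  have hqa := hq a
  have hqb := hq b
  rw [abs_le] at hqa hqb
  have hS : ∑ h : H, B h * Q h a = ∑ h : H, B h * V h := by
    simp [ha]
  have hQb : ∑ h : H, B h * Q h b ≤ ∑ h : H, B h * V h - (1 + 3 * γ) / (1 - γ) * ε := by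
    calc ∑ h : H, B h * Q h b
        ≤ ∑ h : H, B h * (V h - (1 + 3 * γ) / (1 - γ) * ε) :=
          Finset.sum_le_sum fun h _ =>
            mul_le_mul_of_nonneg_left (by linarith [hb h]) (hBnn h)
      _ = ∑ h : H, B h * V h - (1 + 3 * γ) / (1 - γ) * ε := by
          simp [mul_sub, Finset.sum_sub_distrib, ← Finset.sum_mul, hBsum]
  have hε' : (1 + 3 * γ) / (1 - γ) * ε - 2 * (2 * γ * ε / (1 - γ)) = ε := by
    field_simp; ring
  have hab : q b < q a := by linarith [hqa.1, hqb.2]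
  have hle : q a ≤ Finset.univ.sup' Finset.univ_nonempty q :=
    Finset.le_sup' q (Finset.mem_univ a)
  linarith
end

section
/- Let γ ∈ [0,1) and ε ≥ 0. If a policy's one-step action choices satisfy V*(h) − Q*(h, π(h)) ≤ ε' with ε' = (1+3γ)ε/(1−γ) for every history h, and values satisfy the Bellman relations Q*(h,a) = r(h,a) + γ Σ_{e'} μ(e'|h,a) V*(h a e') and V^π(h) = r(h,π(h)) + γ Σ_{e'} μ(e'|h,π(h)) V^π(h a e'), with all values bounded in [0, 1/(1−γ)], then V*(h) − V^π(h) ≤ (1+3γ)ε/(1−γ)² for all h. -/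
theorem policy_uplift {H A E : Type*} [Countable E]
    (γ ε : ℝ) (hγ0 : 0 ≤ γ) (hγ1 : γ < 1) (hε : 0 ≤ ε)
    (ext : H → A → E → H)
    (μ : H → A → E → ℝ) (hμnn : ∀ h a e, 0 ≤ μ h a e)
    (hμsum : ∀ h a, ∑' e : E, μ h a e = 1)
    (r : H → A → ℝ) (hr0 : ∀ h a, 0 ≤ r h a) (hr1 : ∀ h a, r h a ≤ 1)
    (Vstar Vpi : H → ℝ) (Qstar : H → A → ℝ) (π : H → A)
    (hVs0 : ∀ h, 0 ≤ Vstar h) (hVs1 : ∀ h, Vstar h ≤ 1 / (1 - γ))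
    (hVp0 : ∀ h, 0 ≤ Vpi h) (hVp1 : ∀ h, Vpi h ≤ 1 / (1 - γ))
    (hBellQ : ∀ h a, Qstar h a = r h a + γ * ∑' e : E, μ h a e * Vstar (ext h a e))
    (hBellPi : ∀ h, Vpi h = r h (π h) + γ * ∑' e : E, μ h (π h) e * Vpi (ext h (π h) e))
    (hnear : ∀ h, Vstar h - Qstar h (π h) ≤ (1 + 3 * γ) * ε / (1 - γ)) :
    ∀ h, Vstar h - Vpi h ≤ (1 + 3 * γ) * ε / (1 - γ) ^ 2 := by
  have hpos : (0:ℝ) < 1 - γ := by linarith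
  set ε' : ℝ := (1 + 3 * γ) * ε / (1 - γ) with hε'
  have hsumμ : ∀ h a, Summable (μ h a) := by
    intro h a
    by_contra hc
    have h0 := tsum_eq_zero_of_not_summable hc
    rw [hμsum h a] at h0
    norm_num at h0
  have hsumV : ∀ (V : H → ℝ), (∀ h, 0 ≤ V h) → (∀ h, V h ≤ 1 / (1 - γ)) →
      ∀ h a, Summable (fun e => μ h a e * V (ext h a e)) := by
    intro V hV0 hV1 h a
    refine Summable.of_nonneg_of_le (fun e => mul_nonneg (hμnn h a e) (hV0 _))
      (fun e => mul_le_mul_of_nonneg_left (hV1 _) (hμnn h a e))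
      ((hsumμ h a).mul_right (1 / (1 - γ)))
  have hsumS := hsumV Vstar hVs0 hVs1
  have hsumP := hsumV Vpi hVp0 hVp1
  set S : Set ℝ := Set.range (fun h => Vstar h - Vpi h) with hS
  have hbdd : BddAbove S := by
    refine ⟨1 / (1 - γ), ?_⟩
    rintro x ⟨h, rfl⟩
    have := hVs1 h; have := hVp0 h
    simp only
    linarith
  set D : ℝ := sSup S with hD
  have hmemD : ∀ h, Vstar h - Vpi h ≤ D := fun h => le_csSup hbdd ⟨h, rfl⟩
  have hstep : ∀ h, Vstar h - Vpi h ≤ ε' + γ * D := by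
    intro h
    have hsum1 := hsumS h (π h)
    have hsum2 := hsumP h (π h)
    have hkey : ∑' e, μ h (π h) e * Vstar (ext h (π h) e)
        ≤ (∑' e, μ h (π h) e * Vpi (ext h (π h) e)) + D := by
      have hle : ∀ e, μ h (π h) e * Vstar (ext h (π h) e)
          ≤ μ h (π h) e * Vpi (ext h (π h) e) + μ h (π h) e * D := by
        intro e
        have h1 := hmemD (ext h (π h) e)
        nlinarith [hμnn h (π h) e]
      have hsum3 : Summable (fun e => μ h (π h) e * Vpi (ext h (π h) e) + μ h (π h) e * D) :=
        hsum2.add ((hsumμ h (π h)).mul_right D)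
      calc ∑' e, μ h (π h) e * Vstar (ext h (π h) e)
          ≤ ∑' e, (μ h (π h) e * Vpi (ext h (π h) e) + μ h (π h) e * D) :=
            Summable.tsum_le_tsum hle hsum1 hsum3
        _ = (∑' e, μ h (π h) e * Vpi (ext h (π h) e)) + ∑' e, μ h (π h) e * D :=
            Summable.tsum_add hsum2 ((hsumμ h (π h)).mul_right D)
        _ = (∑' e, μ h (π h) e * Vpi (ext h (π h) e)) + D := by
            rw [tsum_mul_right, hμsum h (π h), one_mul]
    have hQ := hBellQ h (π h)
    have hP := hBellPi h
    have hn := hnear h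
    rw [hQ] at hn
    rw [hP]
    have := mul_le_mul_of_nonneg_left hkey hγ0
    nlinarith
  intro h
  have hne : S.Nonempty := ⟨Vstar h - Vpi h, h, rfl⟩
  have hDle : D ≤ ε' + γ * D := by
    refine csSup_le hne ?_
    rintro x ⟨h', rfl⟩
    exact hstep h'
  have hε'0 : 0 ≤ ε' := by
    apply div_nonneg _ (le_of_lt hpos)
    nlinarith
  have hDb : D ≤ ε' / (1 - γ) := by
    rw [le_div_iff₀ hpos]
    nlinarith
  have : Vstar h - Vpi h ≤ ε' / (1 - γ) := (hmemD h).trans hDb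
  have heq : ε' / (1 - γ) = (1 + 3 * γ) * ε / (1 - γ) ^ 2 := by
    rw [hε', div_div, ← sq]
  linarith [heq ▸ this]
end
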